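/- arXiv:1708.06215 — 5 statements merged into one kernel-verified Lean document; each statement's English description precedes it below -/
import Mathlib

section
/- Let s > 0, a > 0, I ≥ 0 and 0 < β < 1 + 2(I + a)/s. Then the second derivative at I of the function J ↦ (1 + s/(J + a))^(−β) is strictly negative. -/
/-! Writing `u = J + a`, two differentiations of `(1 + s/u)^p` give
`p s (1 + s/u)^(p-2) (2u + (p+1)s) / u^4`. For `p = -β < 0` this is negative exactly when
`(1 - β) s + 2u > 0`, i.e. `β < 1 + 2u/s`. -/

namespace OneAddDivRpow

variable {s a p J : ℝ}

lemma one_add_div_pos (hs : 0 ≤ s) (hJ : 0 < J + a) : 0 < 1 + s / (J + a) := by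
  positivity

lemma hasDerivAt (hs : 0 ≤ s) (hJ : 0 < J + a) :
    HasDerivAt (fun J : ℝ => (1 + s / (J + a)) ^ p)
      (-p * s * (((J + a) ^ 2)⁻¹ * (1 + s / (J + a)) ^ (p - 1))) J := by
  have hbase : HasDerivAt (fun J : ℝ => 1 + s / (J + a)) (-s / (J + a) ^ 2) J := by
    simpa using ((hasDerivAt_const J s).div ((hasDerivAt_id J).add_const a) hJ.ne').const_add 1
  convert hbase.rpow_const (p := p) (Or.inl (one_add_div_pos hs hJ).ne') using 1
  ring

lemma deriv_eventuallyEq (hs : 0 ≤ s) (hJ : 0 < J + a) :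
    deriv (fun J : ℝ => (1 + s / (J + a)) ^ p) =ᶠ[nhds J]
      fun J => -p * s * (((J + a) ^ 2)⁻¹ * (1 + s / (J + a)) ^ (p - 1)) := by
  filter_upwards [eventually_gt_nhds (show -a < J by linarith)] with K hK
  exact (hasDerivAt hs (by linarith)).deriv

lemma iteratedDeriv_two (hs : 0 ≤ s) (hJ : 0 < J + a) :
    iteratedDeriv 2 (fun J : ℝ => (1 + s / (J + a)) ^ p) J =
      p * s * (2 * (J + a) + (p + 1) * s) / (J + a) ^ 4 * (1 + s / (J + a)) ^ (p - 2) := by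
  rw [iteratedDeriv_succ, iteratedDeriv_one, (deriv_eventuallyEq hs hJ).deriv_eq]
  have hsq : HasDerivAt (fun J : ℝ => ((J + a) ^ 2)⁻¹)
      (-(2 * (J + a) ^ 1 * 1) / ((J + a) ^ 2) ^ 2) J :=
    (((hasDerivAt_id J).add_const a).pow 2).inv (pow_ne_zero 2 hJ.ne')
  have hderiv := (hsq.mul (hasDerivAt (p := p - 1) hs hJ)).const_mul (-p * s)
  refine hderiv.deriv.trans ?_
  have hsplit : (1 + s / (J + a)) ^ (p - 1) =
      (1 + s / (J + a)) ^ (p - 1 - 1) * (1 + s / (J + a)) := by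
    rw [← Real.rpow_add_one (one_add_div_pos hs hJ).ne', sub_add_cancel]
  rw [hsplit, show p - 1 - 1 = p - 2 by ring]
  field_simp
  ring

end OneAddDivRpow

/-- The second derivative of J ↦ (1 + s/(J + a))^(−β) at I is strictly negative
whenever 0 < β < 1 + 2(I + a)/s. -/
theorem second_deriv_neg (s a β I : ℝ) (hs : 0 < s) (ha : 0 < a) (hI : 0 ≤ I)
    (hβ0 : 0 < β) (hβ1 : β < 1 + 2 * (I + a) / s) :
    iteratedDeriv 2 (fun J : ℝ => (1 + s / (J + a)) ^ (-β)) I < 0 := by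
  have hIa : 0 < I + a := by linarith
  rw [OneAddDivRpow.iteratedDeriv_two hs.le hIa]
  have hfactor : 0 < 2 * (I + a) + (-β + 1) * s := by
    have := (lt_div_iff₀ hs).mp (sub_lt_iff_lt_add'.mpr hβ1)
    linarith
  have hpow : 0 < (1 + s / (I + a)) ^ (-β - 2) :=
    Real.rpow_pos_of_pos (OneAddDivRpow.one_add_div_pos hs.le hIa) _
  rw [neg_mul, neg_mul, neg_div, neg_mul, neg_neg_iff_pos]
  exact mul_pos (div_pos (mul_pos (mul_pos hβ0 hs) hfactor) (by positivity)) hpow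
end

section
/- (Lemma 1) Let s > 0, a > 0 and 0 ≤ β ≤ 1. Then the function g : [0,∞) → ℝ defined by g(I) = (1 + s/(I + a))^(−β) is concave on [0,∞). -/
/-!
Writing `c = a + s`, one has `g I = (1 - s / (I + c)) ^ β`. The inner function is concave, being
`1` minus a nonnegative multiple of the convex function `(I + c)⁻¹`, and it takes values in
`[0, 1]`; since `x ↦ x ^ β` is concave and monotone on `[0, ∞)` for `0 ≤ β ≤ 1`, the composite is
concave.
-/

open Set

theorem ConcaveOn.comp_of_mapsTo {𝕜 E β γ : Type*} [Semiring 𝕜] [PartialOrder 𝕜]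
    [AddCommMonoid E] [AddCommMonoid β] [PartialOrder β] [AddCommMonoid γ] [PartialOrder γ]
    [SMul 𝕜 E] [SMul 𝕜 β] [SMul 𝕜 γ] {s : Set E} {t : Set β} {f : E → β} {g : β → γ}
    (hg : ConcaveOn 𝕜 t g) (hf : ConcaveOn 𝕜 s f) (hg_mono : MonotoneOn g t)
    (hst : MapsTo f s t) : ConcaveOn 𝕜 s (g ∘ f) :=
  ⟨hf.1, fun _ hx _ hy _ _ ha hb hab =>
    (hg.2 (hst hx) (hst hy) ha hb hab).trans <|
      hg_mono (hg.1 (hst hx) (hst hy) ha hb hab) (hst <| hf.1 hx hy ha hb hab) <|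
        hf.2 hx hy ha hb hab⟩

theorem concaveOn_one_sub_div_add {s : ℝ} (hs : 0 ≤ s) (c : ℝ) :
    ConcaveOn ℝ (Ioi (-c)) fun x : ℝ => 1 - s / (x + c) := by
  have hinv : ConvexOn ℝ (Ioi (-c)) fun x : ℝ => (x + c)⁻¹ := by
    have h := (convexOn_zpow (𝕜 := ℝ) (-1)).translate_left c
    rw [preimage_const_add_Ioi, zero_sub] at h
    simpa only [Function.comp_def, zpow_neg_one] using h
  simpa only [Pi.sub_def, smul_eq_mul, div_eq_mul_inv] using
    (concaveOn_const (1 : ℝ) (convex_Ioi (-c))).sub (hinv.smul hs)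

theorem one_sub_div_add_mem_Ici {s a x : ℝ} (hs : 0 ≤ s) (hx : -a < x) :
    1 - s / (x + (a + s)) ∈ Ici 0 := by
  have hle : s / (x + (a + s)) ≤ 1 := div_le_one_of_le₀ (by linarith) (by linarith)
  exact sub_nonneg.2 hle

theorem one_add_div_rpow_neg {s a x : ℝ} (hs : 0 ≤ s) (hx : 0 < x + a) (β : ℝ) :
    (1 + s / (x + a)) ^ (-β) = (1 - s / (x + (a + s))) ^ β := by
  have hpos : 0 < 1 + s / (x + a) := by positivity
  have hne : x + (a + s) ≠ 0 := by linarith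
  have hinv : 1 - s / (x + (a + s)) = (1 + s / (x + a))⁻¹ := by
    field_simp
    ring
  rw [hinv, Real.inv_rpow hpos.le, Real.rpow_neg hpos.le]

theorem concaveOn_one_add_div_rpow_neg {s a β : ℝ} (hs : 0 ≤ s) (hβ0 : 0 ≤ β) (hβ1 : β ≤ 1) :
    ConcaveOn ℝ (Ioi (-a)) fun x : ℝ => (1 + s / (x + a)) ^ (-β) := by
  have hinner : ConcaveOn ℝ (Ioi (-a)) fun x : ℝ => 1 - s / (x + (a + s)) :=
    (concaveOn_one_sub_div_add hs (a + s)).subset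
      (fun x (hx : -a < x) => show -(a + s) < x by linarith) (convex_Ioi _)
  refine ((Real.concaveOn_rpow hβ0 hβ1).comp_of_mapsTo hinner
    (Real.monotoneOn_rpow_Ici_of_exponent_nonneg hβ0)
    (fun _ hx => one_sub_div_add_mem_Ici hs hx)).congr fun x (hx : -a < x) => ?_
  exact (one_add_div_rpow_neg hs (by linarith) β).symm

/-- Lemma 1: for 0 ≤ β ≤ 1, the function g(I) = (1 + s/(I + a))^(−β)
is concave on [0, ∞). -/
theorem g_concaveOn (s a β : ℝ) (hs : 0 < s) (ha : 0 < a)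
    (hβ0 : 0 ≤ β) (hβ1 : β ≤ 1) :
    ConcaveOn ℝ (Set.Ici (0 : ℝ)) (fun I : ℝ => (1 + s / (I + a)) ^ (-β)) :=
  (concaveOn_one_add_div_rpow_neg hs.le hβ0 hβ1).subset
    (fun x (hx : 0 ≤ x) => show -a < x by linarith) (convex_Ici 0)
end

section
/- Let (Ω, ℱ, μ) be a probability space, let I : Ω → ℝ be a nonnegative integrable random variable, and let s > 0, a > 0 and 0 ≤ β ≤ 1. Then E[(1 + s/(I + a))^(−β)] ≤ (1 + s/(E[I] + a))^(−β). -/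
open MeasureTheory

lemma concaveOn_comp_mono {s t : Set ℝ} {f g : ℝ → ℝ} (hg : ConcaveOn ℝ t g)
    (hf : ConcaveOn ℝ s f) (hst : Set.MapsTo f s t) (hg' : MonotoneOn g t) :
    ConcaveOn ℝ s (g ∘ f) :=
  ⟨hf.1, fun x hx y hy p q hp hq hpq =>
    (hg.2 (hst hx) (hst hy) hp hq hpq).trans
      (hg' (hg.1 (hst hx) (hst hy) hp hq hpq) (hst (hf.1 hx hy hp hq hpq))
        (hf.2 hx hy hp hq hpq))⟩

lemma concave_frac {a s : ℝ} (hs : 0 < s) (ha : 0 < a) :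
    ConcaveOn ℝ (Set.Ici 0) (fun x : ℝ => (x + a) / (x + a + s)) := by
  refine ⟨convex_Ici 0, fun x hx y hy p q hp hq hpq => ?_⟩
  simp only [smul_eq_mul] at *
  have hx0 : (0:ℝ) ≤ x := hx
  have hy0 : (0:ℝ) ≤ y := hy
  have hu : 0 < x + a + s := by linarith
  have hv : 0 < y + a + s := by linarith
  have hw : 0 < p * x + q * y + a + s := by nlinarith
  have hq' : q = 1 - p := by linarith
  subst hq'
  rw [← mul_div_assoc, ← mul_div_assoc, div_add_div _ _ hu.ne' hv.ne',
    div_le_div_iff₀ (by positivity) hw]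
  nlinarith [mul_nonneg (mul_nonneg hs.le (mul_nonneg hp hq)) (sq_nonneg (x - y))]
  
/-- Jensen's inequality for the concave map I ↦ (1 + s/(I + a))^(−β), 0 ≤ β ≤ 1:
E[(1 + s/(I + a))^(−β)] ≤ (1 + s/(E[I] + a))^(−β). -/
theorem jensen_ec_lower_bound {Ω : Type*} [MeasurableSpace Ω] (μ : Measure Ω)
    [IsProbabilityMeasure μ] (I : Ω → ℝ) (hint : Integrable I μ)
    (hnn : ∀ ω, 0 ≤ I ω) (s a β : ℝ) (hs : 0 < s) (ha : 0 < a)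
    (hβ0 : 0 ≤ β) (hβ1 : β ≤ 1) :
    (∫ ω, (1 + s / (I ω + a)) ^ (-β) ∂μ)
      ≤ (1 + s / ((∫ ω, I ω ∂μ) + a)) ^ (-β) := by
  set g : ℝ → ℝ := fun x => (1 + s / (x + a)) ^ (-β) with hg
  -- key pointwise formula on Ici 0
  have key : ∀ x : ℝ, 0 ≤ x → g x = ((x + a) / (x + a + s)) ^ β := by
    intro x hx
    have hxa : 0 < x + a := by linarith
    have hb : (0:ℝ) ≤ 1 + s / (x + a) := by positivity
    rw [hg]
    simp only
    rw [Real.rpow_neg hb, ← Real.inv_rpow hb]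
    congr 1
    field_simp
  -- concavity of g on Ici 0
  have hconc : ConcaveOn ℝ (Set.Ici 0) g := by
    have houter : ConcaveOn ℝ (Set.Ici 0) (fun t : ℝ => t ^ β) :=
      Real.concaveOn_rpow hβ0 hβ1
    have hmono : MonotoneOn (fun t : ℝ => t ^ β) (Set.Ici 0) :=
      fun x hx y _ hxy => Real.rpow_le_rpow hx hxy hβ0
    have hmaps : Set.MapsTo (fun x : ℝ => (x + a) / (x + a + s)) (Set.Ici 0) (Set.Ici 0) := by
      intro x hx
      have hx0 : (0:ℝ) ≤ x := hx
      have : (0:ℝ) ≤ (x + a) / (x + a + s) := by positivity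
      exact this
    have := concaveOn_comp_mono houter (concave_frac hs ha) hmaps hmono
    exact this.congr fun x hx => (key x hx).symm
  -- continuity of g on Ici 0
  have hcont : ContinuousOn g (Set.Ici 0) := by
    apply ContinuousOn.rpow_const
    · exact continuousOn_const.add (continuousOn_const.div
        (continuousOn_id.add continuousOn_const)
        (fun x hx => by have : (0:ℝ) ≤ x := hx; positivity))
    · intro x hx
      have : (0:ℝ) ≤ x := hx
      left
      positivity
  -- g ∘ I is bounded hence integrable
  have hmeas : Measurable g := by measurability
  have hgle : ∀ ω, ‖g (I ω)‖ ≤ 1 := by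
    intro ω
    have hxa : 0 < I ω + a := by linarith [hnn ω]
    have hb1 : (1:ℝ) ≤ 1 + s / (I ω + a) := by
      have : 0 ≤ s / (I ω + a) := by positivity
      linarith
    rw [Real.norm_eq_abs, abs_of_nonneg (Real.rpow_nonneg (by linarith) _)]
    exact Real.rpow_le_one_of_one_le_of_nonpos hb1 (by linarith)
  have hgi : Integrable (g ∘ I) μ := by
    refine Integrable.mono' (integrable_const 1)
      (hmeas.comp_aemeasurable hint.aemeasurable).aestronglyMeasurable ?_
    exact Filter.Eventually.of_forall fun ω => hgle ω
  exact hconc.le_map_integral hcont isClosed_Ici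
    (Filter.Eventually.of_forall fun ω => hnn ω) hint hgi
end

section
/- (Core computation of Proposition 1) Let P ≥ 0, d > 0, R > 0, and let α, ψ be real. Then (1/(π R²))·∫₀^{2π} ∫₀^{R} P·d^{−α}·[1 − (α/2)·((r/d)² + 2(r/d)·cos(θ + ψ)) + (α(α+2)/8)·((r/d)² + 2(r/d)·cos(θ + ψ))²]·r dr dθ = P·d^{−α}·[1 + (α²/8)·(R⁴/(3d⁴) + R²/d²) + (α/4)·(R⁴/(3d⁴))]. In particular the value does not depend on ψ. -/
/-!
Expanding the Taylor polynomial, the integrand is a polynomial in `r` whose coefficients are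
quadratic in `cos (θ + ψ)`. Integrating in `r` over `[0, R]` leaves `A + B cos (θ + ψ) + C cos² (θ + ψ)`,
and over a full period `cos (θ + ψ)` integrates to `0` and `cos² (θ + ψ)` to `π`, whatever `ψ` is.
-/

open Real Finset

theorem integral_sum_mul_pow {n : ℕ} (a : Fin n → ℝ) (R : ℝ) :
    ∫ r in (0:ℝ)..R, ∑ k, a k * r ^ (k : ℕ) = ∑ k, a k * (R ^ ((k : ℕ) + 1) / ((k : ℕ) + 1)) := by
  rw [intervalIntegral.integral_finsetSum (f := fun k r => a k * r ^ (k : ℕ)) fun k _ =>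
    (continuous_const.mul (continuous_pow _)).intervalIntegrable _ _]
  refine sum_congr rfl fun k _ => ?_
  rw [intervalIntegral.integral_const_mul, integral_pow]
  simp

theorem integral_taylor_interference_radial (K α c d R : ℝ) :
    ∫ r in (0:ℝ)..R,
        K * (1 - (α / 2) * ((r / d) ^ 2 + 2 * (r / d) * c)
          + (α * (α + 2) / 8) * ((r / d) ^ 2 + 2 * (r / d) * c) ^ 2) * r
      = K * (R ^ 2 / 2 - α * R ^ 4 / (8 * d ^ 2) + α * (α + 2) * R ^ 6 / (48 * d ^ 4))
        + K * (-α * R ^ 3 / (3 * d) + α * (α + 2) * R ^ 5 / (10 * d ^ 3)) * c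
        + K * (α * (α + 2) * R ^ 4 / (8 * d ^ 2)) * c ^ 2 := by
  have hpoly : ∀ r : ℝ,
      K * (1 - (α / 2) * ((r / d) ^ 2 + 2 * (r / d) * c)
          + (α * (α + 2) / 8) * ((r / d) ^ 2 + 2 * (r / d) * c) ^ 2) * r
        = ∑ k, ![0, K, -K * α * c / d,
            K * α * (-1 + (α + 2) * c ^ 2) / (2 * d ^ 2),
            K * α * (α + 2) * c / (2 * d ^ 3), K * α * (α + 2) / (8 * d ^ 4)] k * r ^ (k : ℕ) := by
    intro r
    simp only [Fin.sum_univ_six, Matrix.cons_val, Fin.coe_ofNat_eq_mod]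
    ring
  simp_rw [hpoly, integral_sum_mul_pow]
  simp only [Fin.sum_univ_six, Matrix.cons_val, Fin.coe_ofNat_eq_mod]
  ring

theorem integral_cos_add_eq_zero (ψ : ℝ) : ∫ θ in (0:ℝ)..(2 * π), cos (θ + ψ) = 0 := by
  rw [intervalIntegral.integral_comp_add_right cos, integral_cos, zero_add, add_comm,
    sin_add_two_pi, sub_self]

theorem integral_cos_add_sq (ψ : ℝ) : ∫ θ in (0:ℝ)..(2 * π), cos (θ + ψ) ^ 2 = π := by
  rw [intervalIntegral.integral_comp_add_right (fun x => cos x ^ 2), integral_cos_sq, zero_add,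
    add_comm (2 * π) ψ, sin_add_two_pi, cos_add_two_pi]
  ring

theorem integral_quadratic_cos_add (A B C ψ : ℝ) :
    ∫ θ in (0:ℝ)..(2 * π), (A + B * cos (θ + ψ) + C * cos (θ + ψ) ^ 2) = 2 * π * A + π * C := by
  rw [intervalIntegral.integral_add, intervalIntegral.integral_add,
    intervalIntegral.integral_const, intervalIntegral.integral_const_mul,
    intervalIntegral.integral_const_mul, integral_cos_add_eq_zero, integral_cos_add_sq]
  · simp only [sub_zero, smul_eq_mul]
    ring
  all_goals exact Continuous.intervalIntegrable (by fun_prop) _ _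

theorem prop1_average_interference_general (P d R α ψ : ℝ) (hR : 0 < R) :
    (1 / (π * R ^ 2)) *
        (∫ θ in (0:ℝ)..(2 * π), ∫ r in (0:ℝ)..R,
          P * d ^ (-α) *
            (1 - (α / 2) * ((r / d) ^ 2 + 2 * (r / d) * Real.cos (θ + ψ))
              + (α * (α + 2) / 8) *
                  ((r / d) ^ 2 + 2 * (r / d) * Real.cos (θ + ψ)) ^ 2) * r)
      = P * d ^ (-α) *
          (1 + (α ^ 2 / 8) * (R ^ 4 / (3 * d ^ 4) + R ^ 2 / d ^ 2)
            + (α / 4) * (R ^ 4 / (3 * d ^ 4))) := by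
  have hπR : π * R ^ 2 ≠ 0 := by positivity
  simp_rw [integral_taylor_interference_radial, integral_quadratic_cos_add]
  rw [one_div, inv_mul_eq_iff_eq_mul₀ hπR]
  ring

/-- Core computation of Proposition 1: the average (over a uniformly distributed UE on a
disk of radius R) of the second-order Taylor expansion of the interference from a BS at
distance d with transmit power P; the value does not depend on ψ. -/
theorem prop1_average_interference (P d R α ψ : ℝ) (hP : 0 ≤ P) (hd : 0 < d) (hR : 0 < R) :
    (1 / (π * R ^ 2)) *
        (∫ θ in (0:ℝ)..(2 * π), ∫ r in (0:ℝ)..R,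
          P * d ^ (-α) *
            (1 - (α / 2) * ((r / d) ^ 2 + 2 * (r / d) * Real.cos (θ + ψ))
              + (α * (α + 2) / 8) *
                  ((r / d) ^ 2 + 2 * (r / d) * Real.cos (θ + ψ)) ^ 2) * r)
      = P * d ^ (-α) *
          (1 + (α ^ 2 / 8) * (R ^ 4 / (3 * d ^ 4) + R ^ 2 / d ^ 2)
            + (α / 4) * (R ^ 4 / (3 * d ^ 4))) :=
  prop1_average_interference_general P d R α ψ hR
end

section
/- (Exact value of the truncated inner-region integral I₁ of Appendix A) Let c > 0, R > 0, real α and ψ, and 0 ≤ θ* < π. Then (1/((π − θ*)·R²)) · ∫_{θ*}^{2π−θ*} ∫₀^{c} c^{−α}·[1 − (α/2)·x(r,θ) + (α(α+2)/8)·x(r,θ)²]·r dr dθ, where x(r,θ) = (r/c)² − 2(r/c)·cos(θ − ψ), equals (c^{−(α−2)}/R²)·{ 1 − [α/4 + (2α/(3(π − θ*)))·sin(θ*)·cos(ψ)] + (α(α+2)/8)·[4/3 + (1/(π − θ*))·((8/5)·sin(θ*)·cos(ψ) − (1/2)·sin(2θ*)·cos(2ψ))] }. -/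
open Real

/-!
In the inner region the substitution `r = c t` turns the radial integral into `c ^ 2` times a
moment of a polynomial on `[0, 1]`, which is a quadratic polynomial in `cos (θ - ψ)`. Over the
range `[θ*, 2π - θ*]`, symmetric about `π`, the first two powers of `cos (θ - ψ)` integrate to
`-2 sin θ* cos ψ` and `(π - θ*) - sin (2θ*) cos (2ψ) / 2`.
-/

theorem intervalIntegral.integral_comp_div_mul_self (f : ℝ → ℝ) {c : ℝ} (hc : c ≠ 0) :
    ∫ r in (0:ℝ)..c, f (r / c) * r = c ^ 2 * ∫ t in (0:ℝ)..1, f t * t := by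
  have h := intervalIntegral.integral_comp_div (fun t => f t * t) hc (a := 0) (b := c)
  simp only [zero_div, div_self hc, smul_eq_mul] at h
  calc ∫ r in (0:ℝ)..c, f (r / c) * r = ∫ r in (0:ℝ)..c, c * (f (r / c) * (r / c)) := by
        congr 1; funext r; field_simp
    _ = _ := by rw [intervalIntegral.integral_const_mul, h]; ring

theorem integral_quadratic_mul_self_unitInterval (a b u : ℝ) :
    ∫ t in (0:ℝ)..1, (1 - a * (t ^ 2 - 2 * t * u) + b * (t ^ 2 - 2 * t * u) ^ 2) * t
      = (1 / 2 - a / 4 + b / 6) + (2 * a / 3 - 4 * b / 5) * u + b * u ^ 2 := by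
  have expand : (fun t : ℝ => (1 - a * (t ^ 2 - 2 * t * u) + b * (t ^ 2 - 2 * t * u) ^ 2) * t)
      = fun t => t ^ 1 + 2 * a * u * t ^ 2 + (4 * b * u ^ 2 - a) * t ^ 3
          - 4 * b * u * t ^ 4 + b * t ^ 5 := by
    funext t; ring
  rw [expand]
  simp (disch := apply Continuous.intervalIntegrable; fun_prop) only
    [intervalIntegral.integral_add, intervalIntegral.integral_sub,
      intervalIntegral.integral_const_mul, integral_pow]
  norm_num
  ring

theorem integral_cos_sub_symm_pi (a ψ : ℝ) :
    ∫ θ in a..(2 * π - a), cos (θ - ψ) = -2 * sin a * cos ψ := by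
  rw [intervalIntegral.integral_comp_sub_right (fun θ => cos θ), integral_cos,
    show 2 * π - a - ψ = -(a + ψ) + 2 * π by ring, sin_add_two_pi, sin_neg, sin_add, sin_sub]
  ring

theorem integral_cos_sub_sq_symm_pi (a ψ : ℝ) :
    ∫ θ in a..(2 * π - a), cos (θ - ψ) ^ 2 = (π - a) - sin (2 * a) * cos (2 * ψ) / 2 := by
  rw [intervalIntegral.integral_comp_sub_right (fun θ => cos θ ^ 2), integral_cos_sq,
    show 2 * π - a - ψ = -(a + ψ) + 2 * π by ring, sin_add_two_pi, cos_add_two_pi, sin_neg,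
    cos_neg, sin_two_mul, cos_two_mul, sin_add, sin_sub, cos_add, cos_sub]
  linear_combination (cos a * sin a) * sin_sq_add_cos_sq ψ

theorem integral_quadratic_cos_sub_symm_pi (p q s a ψ : ℝ) :
    ∫ θ in a..(2 * π - a), (p + q * cos (θ - ψ) + s * cos (θ - ψ) ^ 2)
      = 2 * (π - a) * p - 2 * q * sin a * cos ψ
          + s * ((π - a) - sin (2 * a) * cos (2 * ψ) / 2) := by
  simp (disch := apply Continuous.intervalIntegrable; fun_prop) only
    [intervalIntegral.integral_add, intervalIntegral.integral_const,
      intervalIntegral.integral_const_mul, integral_cos_sub_symm_pi, integral_cos_sub_sq_symm_pi,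
      smul_eq_mul]
  ring

theorem appendixA_inner_integral_general (c R α ψ θs : ℝ) (hc : 0 < c)
    (h1 : θs < π) :
    (1 / ((π - θs) * R ^ 2)) *
        (∫ θ in θs..(2 * π - θs), ∫ r in (0:ℝ)..c,
          c ^ (-α) *
            (1 - (α / 2) * ((r / c) ^ 2 - 2 * (r / c) * Real.cos (θ - ψ))
              + (α * (α + 2) / 8) *
                  ((r / c) ^ 2 - 2 * (r / c) * Real.cos (θ - ψ)) ^ 2) * r)
      = (c ^ (-(α - 2)) / R ^ 2) *
          (1 - (α / 4 + (2 * α / (3 * (π - θs))) * Real.sin θs * Real.cos ψ)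
            + (α * (α + 2) / 8) *
                (4 / 3 + (1 / (π - θs)) *
                  ((8 / 5) * Real.sin θs * Real.cos ψ
                    - (1 / 2) * Real.sin (2 * θs) * Real.cos (2 * ψ)))) := by
  have radial : ∀ θ, ∫ r in (0:ℝ)..c, c ^ (-α) *
        (1 - (α / 2) * ((r / c) ^ 2 - 2 * (r / c) * cos (θ - ψ))
          + (α * (α + 2) / 8) * ((r / c) ^ 2 - 2 * (r / c) * cos (θ - ψ)) ^ 2) * r
      = c ^ (-α) * c ^ 2 * ((1 / 2 - α / 8 + α * (α + 2) / 48)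
          + (α / 3 - α * (α + 2) / 10) * cos (θ - ψ)
          + α * (α + 2) / 8 * cos (θ - ψ) ^ 2) := by
    intro θ
    have scale := intervalIntegral.integral_comp_div_mul_self (fun t => c ^ (-α) *
      (1 - (α / 2) * (t ^ 2 - 2 * t * cos (θ - ψ))
        + (α * (α + 2) / 8) * (t ^ 2 - 2 * t * cos (θ - ψ)) ^ 2)) hc.ne'
    simp only [mul_assoc (c ^ (-α))] at scale ⊢
    rw [scale, intervalIntegral.integral_const_mul, integral_quadratic_mul_self_unitInterval]
    ring
  have power : c ^ (-(α - 2)) = c ^ (-α) * c ^ 2 := by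
    rw [show -(α - 2) = -α + (2 : ℕ) by push_cast; ring, rpow_add_natCast hc.ne']
  have hπ : π - θs ≠ 0 := sub_ne_zero.mpr h1.ne'
  simp only [radial]
  rw [intervalIntegral.integral_const_mul, integral_quadratic_cos_sub_symm_pi, power]
  field_simp
  ring

/-- Exact value of the truncated inner-region integral I₁ of Appendix A. -/
theorem appendixA_inner_integral (c R α ψ θs : ℝ) (hc : 0 < c) (hR : 0 < R)
    (h0 : 0 ≤ θs) (h1 : θs < π) :
    (1 / ((π - θs) * R ^ 2)) *
        (∫ θ in θs..(2 * π - θs), ∫ r in (0:ℝ)..c,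
          c ^ (-α) *
            (1 - (α / 2) * ((r / c) ^ 2 - 2 * (r / c) * Real.cos (θ - ψ))
              + (α * (α + 2) / 8) *
                  ((r / c) ^ 2 - 2 * (r / c) * Real.cos (θ - ψ)) ^ 2) * r)
      = (c ^ (-(α - 2)) / R ^ 2) *
          (1 - (α / 4 + (2 * α / (3 * (π - θs))) * Real.sin θs * Real.cos ψ)
            + (α * (α + 2) / 8) *
                (4 / 3 + (1 / (π - θs)) *
                  ((8 / 5) * Real.sin θs * Real.cos ψ
                    - (1 / 2) * Real.sin (2 * θs) * Real.cos (2 * ψ)))) :=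
  appendixA_inner_integral_general c R α ψ θs hc h1
end
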